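/- Let a, b : ℝ → ℝ be functions that are differentiable at every point of the open interval (−1, 1). Assume that for every t ∈ (−1, 1) and every pair of integers (m, n) ≠ (0, 0) one has m·a′(t) + n·b′(t) ≠ 0. Then the set of t ∈ (−1, 1) such that a(t), b(t), 1 are rationally independent (i.e., for all integers m, n, p, the equation m·a(t) + n·b(t) + p = 0 implies m = n = p = 0) is uncountable. -/

import Mathlib

/-!
A point `t` where `a t, b t, 1` are rationally dependent is a zero of some
`m • a + n • b + p` with `(m, n) ≠ (0, 0)`. The derivative of such a function never vanishes,
so each of its zeros is isolated and its zero set is countable. There are countably many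
triples `(m, n, p)`, so the dependent parameters form a countable subset of the uncountable
interval `(-1, 1)`.
-/

open Set Filter

theorem countable_setOf_eq_of_hasDerivAt_ne_zero {𝕜 F : Type*} [NontriviallyNormedField 𝕜]
    [SecondCountableTopology 𝕜] [NormedAddCommGroup F] [NormedSpace 𝕜 F]
    {f f' : 𝕜 → F} {s : Set 𝕜} (hf : ∀ x ∈ s, HasDerivAt f (f' x) x)
    (hf' : ∀ x ∈ s, f' x ≠ 0) (c : F) :
    {x ∈ s | f x = c}.Countable := by
  refine (HereditarilyLindelofSpace.isLindelof _).countable_of_isDiscrete ?_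
  refine isDiscrete_iff_nhdsNE.mpr fun x hx ↦ inf_principal_eq_bot.mpr ?_
  filter_upwards [(hf x hx.1).eventually_ne (c := c) (hf' x hx.1)] with y hy hyc
  exact hy hyc.2

theorem countable_setOf_exists_intCombination_eq_zero {a b : ℝ → ℝ} {s : Set ℝ}
    (ha : ∀ t ∈ s, DifferentiableAt ℝ a t) (hb : ∀ t ∈ s, DifferentiableAt ℝ b t)
    (h : ∀ t ∈ s, ∀ m n : ℤ, (m, n) ≠ (0, 0) → (m : ℝ) * deriv a t + (n : ℝ) * deriv b t ≠ 0) :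
    {t ∈ s | ∃ m n p : ℤ, (m, n) ≠ (0, 0) ∧
      (m : ℝ) * a t + (n : ℝ) * b t + (p : ℝ) = 0}.Countable := by
  have hzeros (m n p : ℤ) :
      {t ∈ s | (m, n) ≠ (0, 0) ∧ (m : ℝ) * a t + (n : ℝ) * b t + (p : ℝ) = 0}.Countable := by
    by_cases hmn : (m, n) = (0, 0)
    · simp [hmn]
    have hderiv (t) (ht : t ∈ s) :
        HasDerivAt (fun t ↦ (m : ℝ) * a t + (n : ℝ) * b t + (p : ℝ))
          ((m : ℝ) * deriv a t + (n : ℝ) * deriv b t) t :=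
      (((ha t ht).hasDerivAt.const_mul _).add ((hb t ht).hasDerivAt.const_mul _)).add_const _
    refine (countable_setOf_eq_of_hasDerivAt_ne_zero hderiv (fun t ht ↦ h t ht m n hmn) 0).mono ?_
    rintro t ⟨ht, -, hzero⟩
    exact ⟨ht, hzero⟩
  refine (countable_iUnion fun m ↦ countable_iUnion fun n ↦ countable_iUnion (hzeros m n)).mono ?_
  rintro t ⟨ht, m, n, p, hmn, hzero⟩
  simp only [mem_iUnion]
  exact ⟨m, n, p, ht, hmn, hzero⟩

/-- Abstract form of the conclusion of Lemma 9: the set of parameters `t ∈ (-1,1)` at which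
`a(t), b(t), 1` are rationally independent is uncountable. -/
theorem stmt1 (a b : ℝ → ℝ)
    (ha : ∀ t ∈ Ioo (-1 : ℝ) 1, DifferentiableAt ℝ a t)
    (hb : ∀ t ∈ Ioo (-1 : ℝ) 1, DifferentiableAt ℝ b t)
    (h : ∀ t ∈ Ioo (-1 : ℝ) 1, ∀ m n : ℤ, (m, n) ≠ (0, 0) →
      (m : ℝ) * deriv a t + (n : ℝ) * deriv b t ≠ 0) :
    ¬ ({t ∈ Ioo (-1 : ℝ) 1 | ∀ m n p : ℤ,
        (m : ℝ) * a t + (n : ℝ) * b t + (p : ℝ) = 0 → m = 0 ∧ n = 0 ∧ p = 0}).Countable := by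
  intro hindep
  have hdep := countable_setOf_exists_intCombination_eq_zero ha hb h
  have hIoo : ¬ (Ioo (-1 : ℝ) 1).Countable := by
    rw [Cardinal.Real.Ioo_countable_iff]
    norm_num
  refine hIoo ((hindep.union hdep).mono fun t ht ↦ ?_)
  by_cases hind : ∀ m n p : ℤ,
      (m : ℝ) * a t + (n : ℝ) * b t + (p : ℝ) = 0 → m = 0 ∧ n = 0 ∧ p = 0
  · exact Or.inl ⟨ht, hind⟩
  push Not at hind
  obtain ⟨m, n, p, hzero, hnontriv⟩ := hind
  refine Or.inr ⟨ht, m, n, p, fun hmn ↦ ?_, hzero⟩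
  obtain ⟨rfl, rfl⟩ := Prod.ext_iff.mp hmn
  exact hnontriv rfl rfl (by simpa using hzero)
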